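/- arXiv:1806.09363 — 3 statements merged into one kernel-verified Lean document; each statement's English description precedes it below -/
import Mathlib

section
/- For the map T(x) = x(1+2^α x^α) on [0,1/2), the sequence defined by a_0 = 1/2 and a_{n+1} = the unique preimage of a_n under T in [0,1/2) satisfies a_n ≤ C · n^{-1/α} for some constant C > 0 and all n ≥ 1. -/
open MeasureTheory Filter Real Set

/-- The intermittent (Liverani–Saussol–Vaienti) map. -/
noncomputable def T (α : ℝ) (x : ℝ) : ℝ :=
  if x < 1/2 then x * (1 + 2 ^ α * x ^ α) else 2 * x - 1

/-!
Put `b n = a n ^ (-α)`. Writing `a n = x (1 + u)` with `x = a (n + 1)` and `u = (2x)^α ≤ 1`,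
the estimates `(1 + u)⁻¹ ≤ 1 - u/2` and Bernoulli's inequality give `(1 + u)^(-α) ≤ 1 - α u / 2`,
so `b (n + 1) - b n ≥ x^(-α) α u / 2 = α 2^α / 2 ≥ α / 2`. Hence `b n ≥ n α / 2`, that is
`a n ≤ (α / 2)^(-1/α) n^(-1/α)`.
-/

lemma one_add_rpow_neg_le {u α : ℝ} (hu0 : 0 ≤ u) (hu1 : u ≤ 1) (hα0 : 0 ≤ α) (hα1 : α ≤ 1) :
    (1 + u) ^ (-α) ≤ 1 - α * u / 2 := by
  have hinv : (1 + u)⁻¹ ≤ 1 - u / 2 := by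
    rw [inv_le_iff_one_le_mul₀ (by positivity)]
    nlinarith
  calc (1 + u) ^ (-α) = (1 + u)⁻¹ ^ α := by rw [rpow_neg (by positivity), inv_rpow (by positivity)]
    _ ≤ (1 + -(u / 2)) ^ α := rpow_le_rpow (by positivity) (by linarith) hα0
    _ ≤ 1 + α * -(u / 2) := rpow_one_add_le_one_add_mul_self (by linarith) hα0 hα1
    _ = 1 - α * u / 2 := by ring

lemma rpow_neg_left_branch_add_le {x α : ℝ} (hx0 : 0 < x) (hx1 : x ≤ 1 / 2)
    (hα0 : 0 ≤ α) (hα1 : α ≤ 1) :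
    (x * (1 + 2 ^ α * x ^ α)) ^ (-α) + α / 2 ≤ x ^ (-α) := by
  set u := 2 ^ α * x ^ α with hu
  have hu0 : 0 ≤ u := by positivity
  have hu1 : u ≤ 1 := by
    rw [hu, ← mul_rpow zero_le_two hx0.le]
    exact rpow_le_one (by positivity) (by linarith) hα0
  have hxu : x ^ (-α) * u = 2 ^ α := by
    rw [hu, rpow_neg hx0.le, mul_left_comm, inv_mul_cancel₀ (by positivity), mul_one]
  have h2α : (1 : ℝ) ≤ 2 ^ α := one_le_rpow one_le_two hα0
  calc (x * (1 + u)) ^ (-α) + α / 2 = x ^ (-α) * (1 + u) ^ (-α) + α / 2 := by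
        rw [mul_rpow hx0.le (by positivity)]
    _ ≤ x ^ (-α) * (1 - α * u / 2) + α / 2 * 2 ^ α := by
        gcongr
        exacts [one_add_rpow_neg_le hu0 hu1 hα0 hα1, le_mul_of_one_le_right (by positivity) h2α]
    _ = x ^ (-α) := by rw [← hxu]; ring

lemma nat_mul_le_of_add_le {b : ℕ → ℝ} {c : ℝ} (h0 : 0 ≤ b 0) (hstep : ∀ n, b n + c ≤ b (n + 1))
    (n : ℕ) : n * c ≤ b n := by
  induction n with
  | zero => simpa using h0
  | succ n ih => push_cast; linarith [hstep n]

section Preimages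

variable {α : ℝ} {a : ℕ → ℝ}

lemma preimages_pos (ha0 : 0 < a 0)
    (ha : ∀ n, T α (a (n+1)) = a n ∧ a (n+1) ∈ Set.Ico (0:ℝ) (1/2)) (n : ℕ) : 0 < a n := by
  induction n with
  | zero => exact ha0
  | succ n ih =>
    obtain ⟨hT, hnonneg, hlt⟩ := ha n
    refine hnonneg.lt_of_ne fun h0 => ih.ne' ?_
    rw [← hT, T, if_pos hlt, ← h0, zero_mul]

lemma nat_mul_le_preimages_rpow_neg (hα0 : 0 ≤ α) (hα1 : α ≤ 1) (ha0 : 0 < a 0)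
    (ha : ∀ n, T α (a (n+1)) = a n ∧ a (n+1) ∈ Set.Ico (0:ℝ) (1/2)) (n : ℕ) :
    n * (α / 2) ≤ a n ^ (-α) := by
  refine nat_mul_le_of_add_le (b := fun n => a n ^ (-α)) (by positivity) (fun n => ?_) n
  obtain ⟨hT, -, hlt⟩ := ha n
  rw [← hT, T, if_pos hlt]
  exact rpow_neg_left_branch_add_le (preimages_pos ha0 ha (n + 1)) hlt.le hα0 hα1

end Preimages

theorem stmt0 (α : ℝ) (hα0 : 0 < α) (hα1 : α < 1) (a : ℕ → ℝ)
    (ha0 : a 0 = 1/2)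
    (ha : ∀ n, T α (a (n+1)) = a n ∧ a (n+1) ∈ Set.Ico (0:ℝ) (1/2)) :
    ∃ C > 0, ∀ n ≥ 1, a n ≤ C * (n : ℝ) ^ (-(1/α)) := by
  have ha0_pos : 0 < a 0 := by rw [ha0]; norm_num
  refine ⟨(α / 2) ^ (-(1/α)), by positivity, fun n hn => ?_⟩
  have hn0 : (0 : ℝ) < n := by exact_mod_cast hn
  have hexp : -(1/α) = (-α)⁻¹ := by rw [one_div, inv_neg]
  rw [← mul_rpow (by positivity) hn0.le, mul_comm, hexp,
    le_rpow_inv_iff_of_neg (preimages_pos ha0_pos ha n) (by positivity) (by linarith)]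
  exact nat_mul_le_preimages_rpow_neg hα0.le hα1.le ha0_pos ha n
end

section
/- Let μ be the absolutely continuous T_α-invariant probability measure and suppose a_n ≤ C n^{-1/α}. Fix 0 < ε < 1−α. Then the series ∑_{i≥1} μ{ x : T_α^{i−1}(x) ∈ [1/2,1) ∩ T_α^{-1}[0, a_{⌈i^{α+ε}⌉}] } converges, and hence by the Borel–Cantelli lemma, for μ-almost every x there are only finitely many i with T_α^{i−1}(x) ∈ [1/2,1) ∩ T_α^{-1}[0, a_{⌈i^{α+ε}⌉}]. -/
/-!
The `i`-th target set `S_i` lies in `[1/2, 1/2 + a_N / 2]` with `N = ⌈(i+1)^(α+ε)⌉`, because `T`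
is `x ↦ 2x - 1` on `[1/2, 1)`. Since `μ ≤ Ct · Leb` there and `a_N ≤ C N^(-1/α)`, its measure is
`O((i+1)^(-(α+ε)/α))`, which is summable as `ε > 0`. By invariance of `μ` the events
`T^[i] x ∈ S_i` have the same measures, and Borel–Cantelli finishes the proof.
-/

open MeasureTheory Filter Real Set

lemma measurable_T {α : ℝ} (hα : 0 ≤ α) : Measurable (T α) :=
  Measurable.ite (measurableSet_lt measurable_id measurable_const)
    (measurable_id.mul (measurable_const.add
      (measurable_const.mul (continuous_rpow_const hα).measurable)))
    ((measurable_const.mul measurable_id).sub measurable_const)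

lemma Ico_inter_preimage_T_Icc_subset (α b c : ℝ) :
    Ico (1/2 : ℝ) 1 ∩ T α ⁻¹' Icc b c ⊆ Ico (1/2 : ℝ) 1 ∩ Icc ((1 + b) / 2) ((1 + c) / 2) := by
  rintro x ⟨hx, hTx⟩
  have hT : T α x = 2 * x - 1 := if_neg (not_lt.mpr hx.1)
  rw [mem_preimage, hT, mem_Icc] at hTx
  exact ⟨hx, by linarith [hTx.1], by linarith [hTx.2]⟩

lemma apply_natCeil_rpow_le {α C t β : ℝ} {a : ℕ → ℝ} (hα : 0 < α) (hC : 0 ≤ C)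
    (haC : ∀ n ≥ 1, a n ≤ C * (n : ℝ) ^ (-(1/α))) (ht : 0 < t) :
    a ⌈t ^ β⌉₊ ≤ C * t ^ (-(β / α)) := by
  have htβ : 0 < t ^ β := rpow_pos_of_pos ht β
  calc a ⌈t ^ β⌉₊ ≤ C * (⌈t ^ β⌉₊ : ℝ) ^ (-(1/α)) := haC _ (Nat.one_le_ceil_iff.mpr htβ)
    _ ≤ C * (t ^ β) ^ (-(1/α)) := mul_le_mul_of_nonneg_left
        (rpow_le_rpow_of_nonpos htβ (Nat.le_ceil _) (neg_nonpos.mpr (by positivity))) hC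
    _ = C * t ^ (-(β / α)) := by
        rw [← rpow_mul ht.le]
        ring_nf

lemma summable_nat_add_one_rpow {q : ℝ} (hq : q < -1) :
    Summable fun i : ℕ => ((i : ℝ) + 1) ^ q := by
  simpa using (summable_nat_add_iff 1).mpr (summable_nat_rpow.mpr hq)

lemma MeasureTheory.MeasurePreserving.summable_and_ae_finite_setOf_iterate_mem
    {X : Type*} [MeasurableSpace X] {μ : Measure X} {f : X → X}
    (hf : MeasurePreserving f μ μ) {S : ℕ → Set X} (hS : ∀ i, NullMeasurableSet (S i) μ)
    (hsum : ∑' i, μ (S i) ≠ ⊤) :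
    Summable (fun i => (μ {x | f^[i] x ∈ S i}).toReal) ∧
      ∀ᵐ x ∂μ, {i | f^[i] x ∈ S i}.Finite := by
  have hpre : ∀ i, μ {x | f^[i] x ∈ S i} = μ (S i) :=
    fun i => (hf.iterate i).measure_preimage (hS i)
  have hsum' : ∑' i, μ {x | f^[i] x ∈ S i} ≠ ⊤ := by simpa only [hpre] using hsum
  refine ⟨ENNReal.summable_toReal hsum', ?_⟩
  filter_upwards [ae_eventually_notMem hsum'] with x hx
  rw [← Nat.cofinite_eq_atTop, eventually_cofinite] at hx
  simpa using hx

theorem stmt7_general (α ε : ℝ) (hα0 : 0 < α) (hε0 : 0 < ε)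
    (a : ℕ → ℝ)
    (C : ℝ) (hC : 0 < C) (haC : ∀ n ≥ 1, a n ≤ C * (n : ℝ) ^ (-(1/α)))
    (μ : Measure ℝ)
    (hinv : MeasurePreserving (T α) μ μ)
    (Ct : ℝ) (hCt : 0 < Ct)
    (hμleb : ∀ b c : ℝ, μ (Set.Ico (1/2:ℝ) 1 ∩ Set.Icc b c) ≤ ENNReal.ofReal (Ct * (c - b))) :
    Summable (fun i : ℕ =>
      (μ {x | (T α)^[i] x ∈ Set.Ico (1/2:ℝ) 1 ∩
        (T α) ⁻¹' (Set.Icc 0 (a ⌈((i : ℝ) + 1) ^ (α + ε)⌉₊))}).toReal) ∧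
    ∀ᵐ x ∂μ, Set.Finite {i : ℕ | (T α)^[i] x ∈ Set.Ico (1/2:ℝ) 1 ∩
        (T α) ⁻¹' (Set.Icc 0 (a ⌈((i : ℝ) + 1) ^ (α + ε)⌉₊))} := by
  set q := -((α + ε) / α)
  have hq : q < -1 := by
    rw [neg_lt_neg_iff, one_lt_div hα0]
    linarith
  have hbound (i : ℕ) : μ (Ico (1/2 : ℝ) 1 ∩ T α ⁻¹' Icc 0 (a ⌈((i : ℝ) + 1) ^ (α + ε)⌉₊)) ≤
      ENNReal.ofReal (Ct * C / 2 * ((i : ℝ) + 1) ^ q) := by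
    refine (measure_mono (Ico_inter_preimage_T_Icc_subset α _ _)).trans
      ((hμleb _ _).trans (ENNReal.ofReal_le_ofReal ?_))
    calc Ct * ((1 + a ⌈((i : ℝ) + 1) ^ (α + ε)⌉₊) / 2 - (1 + 0) / 2)
        = Ct / 2 * a ⌈((i : ℝ) + 1) ^ (α + ε)⌉₊ := by ring
      _ ≤ Ct / 2 * (C * ((i : ℝ) + 1) ^ q) := by
        gcongr
        exact apply_natCeil_rpow_le hα0 hC.le haC (by positivity)
      _ = Ct * C / 2 * ((i : ℝ) + 1) ^ q := by ring
  refine hinv.summable_and_ae_finite_setOf_iterate_mem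
    (fun i => (measurableSet_Ico.inter (measurable_T hα0.le measurableSet_Icc)).nullMeasurableSet)
    (ne_top_of_le_ne_top ?_ (ENNReal.tsum_le_tsum hbound))
  rw [← ENNReal.ofReal_tsum_of_nonneg (fun i => by positivity)
    ((summable_nat_add_one_rpow hq).mul_left (Ct * C / 2))]
  exact ENNReal.ofReal_ne_top

theorem stmt7 (α ε : ℝ) (hα0 : 0 < α) (hα1 : α < 1) (hε0 : 0 < ε) (hε : ε < 1 - α)
    (a : ℕ → ℝ) (ha0 : a 0 = 1/2)
    (ha : ∀ n, T α (a (n+1)) = a n ∧ a (n+1) ∈ Set.Ico (0:ℝ) (1/2))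
    (C : ℝ) (hC : 0 < C) (haC : ∀ n ≥ 1, a n ≤ C * (n : ℝ) ^ (-(1/α)))
    (μ : Measure ℝ) [IsProbabilityMeasure μ]
    (hinv : MeasurePreserving (T α) μ μ) (hac : μ ≪ volume)
    (Ct : ℝ) (hCt : 0 < Ct)
    (hμleb : ∀ b c : ℝ, μ (Set.Ico (1/2:ℝ) 1 ∩ Set.Icc b c) ≤ ENNReal.ofReal (Ct * (c - b))) :
    Summable (fun i : ℕ =>
      (μ {x | (T α)^[i] x ∈ Set.Ico (1/2:ℝ) 1 ∩
        (T α) ⁻¹' (Set.Icc 0 (a ⌈((i : ℝ) + 1) ^ (α + ε)⌉₊))}).toReal) ∧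
    ∀ᵐ x ∂μ, Set.Finite {i : ℕ | (T α)^[i] x ∈ Set.Ico (1/2:ℝ) 1 ∩
        (T α) ⁻¹' (Set.Icc 0 (a ⌈((i : ℝ) + 1) ^ (α + ε)⌉₊))} :=
  stmt7_general α ε hα0 hε0 a C hC haC μ hinv Ct hCt hμleb
end

section
/- Define R_n(x) as the longest run of one digits among ε_1(x),…,ε_n(x). Then for μ-almost all x ∈ [0,1), limsup_{n→∞} R_n(x) / log₂ n ≤ 1. -/
/-!
A run of `k + 1` ones starting at time `i` forces `T^i x ≥ 1 - 2^(-(k+1))`, since `T` is the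
doubling map `x ↦ 2x - 1` on `[1/2, 1)`. By invariance and the density bound on `[1/2, 1)` this
has measure at most `C 2^(-(k+1))`. A union bound over the starting positions and Borel–Cantelli
along `n = 2^(a j)` give `R_n ≤ (1 + 1/a) log₂ n + O(1)` eventually, for every `a ≥ 1`.
-/

open MeasureTheory Filter Real Set

/-- The longest run of zero digits among ε₁(x),…,εₙ(x), where εₖ(x) = 0 iff T^[k-1] x ∈ [0,1/2). -/
noncomputable def runZero (α : ℝ) (n : ℕ) (x : ℝ) : ℕ :=
  sSup {k | ∃ i, i + k ≤ n ∧ ∀ j < k, (T α)^[i + j] x < 1/2}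

/-- The longest run of one digits among ε₁(x),…,εₙ(x), where εₖ(x) = 1 iff T^[k-1] x ∈ [1/2,1). -/
noncomputable def runOne (α : ℝ) (n : ℕ) (x : ℝ) : ℕ :=
  sSup {k | ∃ i, i + k ≤ n ∧ ∀ j < k, 1/2 ≤ (T α)^[i + j] x}

open Topology
open scoped ENNReal

lemma tendsto_measure_Ici_atTop (μ : Measure ℝ) [IsFiniteMeasure μ] :
    Tendsto (fun t => μ (Ici t)) atTop (𝓝 0) := by
  have hempty : ⋂ t : ℝ, Ici t = ∅ :=
    eq_empty_of_forall_notMem fun x hx => by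
      have := mem_iInter.1 hx (x + 1)
      simp only [mem_Ici] at this
      linarith
  have := tendsto_measure_iInter_atTop (μ := μ)
    (fun t => measurableSet_Ici.nullMeasurableSet) antitone_Ici ⟨0, measure_ne_top μ _⟩
  rwa [hempty, measure_empty] at this

lemma measure_Ico_le_of_forall_measure_Icc_le (μ : Measure ℝ) {a b : ℝ} {M : ℝ≥0∞}
    (h : ∀ c < b, μ (Icc a c) ≤ M) : μ (Ico a b) ≤ M := by
  set u : ℕ → ℝ := fun n => b - 1 / ((n : ℝ) + 1)
  have hu_lt : ∀ n, u n < b := fun n => sub_lt_self b (by positivity)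
  have hu_mono : Monotone u := fun m n hmn => by
    simp only [u]
    gcongr
  have hu_lim : Tendsto u atTop (𝓝 b) := by
    simpa [u] using tendsto_one_div_add_atTop_nhds_zero_nat.const_sub b
  have hIco : Ico a b = ⋃ n, Icc a (u n) := by
    rw [← Ici_inter_Iio, ← iUnion_Iic_eq_Iio_of_lt_of_tendsto hu_lt hu_lim, inter_iUnion]
    rfl
  rw [hIco, (antitone_const.Icc hu_mono).measure_iUnion]
  exact iSup_le fun n => h _ (hu_lt n)

lemma two_pow_add_one_mul_half_pow_le (m j : ℕ) :
    ((2 : ℝ)^m + 1) * (1/2)^(m + j + 1) ≤ (1/2)^j := by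
  have hinv : (2 : ℝ)^m * (1/2)^m = 1 := by rw [← mul_pow]; norm_num
  have hle : (1/2 : ℝ)^m ≤ 1 := pow_le_one₀ (by norm_num) (by norm_num)
  have hpos : (0 : ℝ) ≤ (1/2)^j := by positivity
  rw [pow_succ, pow_add]
  nlinarith [mul_le_mul_of_nonneg_right hle hpos]

lemma limsup_div_logb_le_of_eventually_le {r : ℕ → ℕ} (hr : Monotone r) {a b : ℕ} (ha : 0 < a)
    (h : ∀ᶠ j in atTop, r (2^(a * j)) ≤ b * j) :
    limsup (fun n : ℕ => (r n : ℝ) / logb 2 n) atTop ≤ b / a := by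
  obtain ⟨J, hJ⟩ := eventually_atTop.1 h
  have hbound : ∀ n ≥ 2^(a * J), (r n : ℝ) ≤ b / a * logb 2 n + b := by
    intro n hn
    set q := Nat.log 2 n / a
    have hn_lt : n < 2^(a * (q + 1)) :=
      (Nat.lt_pow_succ_log_self one_lt_two n).trans_le
        (Nat.pow_le_pow_right two_pos (Nat.lt_mul_div_succ _ ha))
    have hJq : J ≤ q :=
      (Nat.le_div_iff_mul_le ha).2 (by rw [mul_comm]; exact Nat.le_log_of_pow_le one_lt_two hn)
    have hrq : r n ≤ b * (q + 1) := (hr hn_lt.le).trans (hJ _ (by omega))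
    have hq : (q : ℝ) ≤ logb 2 n / a :=
      Nat.cast_div_le.trans (by gcongr; exact_mod_cast natLog_le_logb n 2)
    calc (r n : ℝ) ≤ b * (q + 1) := by exact_mod_cast hrq
      _ ≤ b * (logb 2 n / a + 1) := by gcongr
      _ = b / a * logb 2 n + b := by ring
  have hlog : Tendsto (fun n : ℕ => logb 2 n) atTop atTop :=
    (tendsto_logb_atTop one_lt_two).comp tendsto_natCast_atTop_atTop
  have hlim : Tendsto (fun n : ℕ => b / a + b / logb 2 n) atTop (𝓝 (b / a)) := by
    simpa using tendsto_const_nhds.add (tendsto_const_nhds.div_atTop hlog)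
  have hle : ∀ᶠ n : ℕ in atTop, (r n : ℝ) / logb 2 n ≤ b / a + b / logb 2 n := by
    filter_upwards [eventually_ge_atTop (2^(a * J)), hlog.eventually_gt_atTop 0] with n hn hpos
    rw [div_le_iff₀ hpos, add_mul, div_mul_cancel₀ _ hpos.ne']
    exact hbound n hn
  have hcobdd : IsCoboundedUnder (· ≤ ·) atTop fun n : ℕ => (r n : ℝ) / logb 2 n :=
    isCoboundedUnder_le_of_eventually_le atTop (x := 0) <| by
      filter_upwards [hlog.eventually_ge_atTop 0] with n hn
      positivity
  calc limsup (fun n : ℕ => (r n : ℝ) / logb 2 n) atTop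
      ≤ limsup (fun n : ℕ => b / a + b / logb 2 n) atTop :=
        limsup_le_limsup hle hcobdd hlim.isBoundedUnder_le
    _ = b / a := hlim.limsup_eq

lemma T_of_half_le {α x : ℝ} (hx : 1/2 ≤ x) : T α x = 2 * x - 1 := by
  rw [T, if_neg (not_lt.2 hx)]

lemma one_sub_half_pow_le_of_iterate_ge_half {α : ℝ} (k : ℕ) {y : ℝ}
    (h : ∀ j < k + 1, 1/2 ≤ (T α)^[j] y) : 1 - (1/2)^(k + 1) ≤ y := by
  induction k generalizing y with
  | zero =>
    have h0 := h 0 one_pos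
    norm_num at h0 ⊢
    linarith
  | succ k ih =>
    have hy : 1/2 ≤ y := h 0 (by omega)
    have hTy := ih (y := T α y) fun j hj => by
      simpa only [Function.iterate_succ_apply] using h (j + 1) (by omega)
    rw [T_of_half_le hy] at hTy
    rw [pow_succ]
    linarith

lemma le_runOne_iff {α : ℝ} {n : ℕ} {x : ℝ} {k : ℕ} :
    k ≤ runOne α n x ↔ ∃ i, i + k ≤ n ∧ ∀ j < k, 1/2 ≤ (T α)^[i + j] x := by
  set S := {k | ∃ i, i + k ≤ n ∧ ∀ j < k, 1/2 ≤ (T α)^[i + j] x}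
  have hS_bdd : BddAbove S := ⟨n, fun m ⟨i, hi, _⟩ => by omega⟩
  have hS_lower : ∀ {a b : ℕ}, a ≤ b → b ∈ S → a ∈ S := fun hab ⟨i, hi, hrun⟩ =>
    ⟨i, by omega, fun j hj => hrun j (hj.trans_le hab)⟩
  exact ⟨fun h => hS_lower h (Nat.sSup_mem ⟨0, 0, by simp, by simp⟩ hS_bdd), (le_csSup hS_bdd ·)⟩

lemma runOne_mono (α x : ℝ) : Monotone fun n => runOne α n x := fun _ _ hnm =>
  have ⟨i, hi, hrun⟩ := le_runOne_iff.1 le_rfl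
  le_runOne_iff.2 ⟨i, hi.trans hnm, hrun⟩

section Invariant

variable {α : ℝ} {μ : Measure ℝ} {Ct : ℝ}

/-- `T` doubles the distance to `1` on `[1, ∞)`, so an invariant finite measure cannot charge
`(1, ∞)`; the fixed point `1` is excluded by absolute continuity. -/
lemma measure_Ici_one_eq_zero [IsFiniteMeasure μ] (hinv : MeasurePreserving (T α) μ μ)
    (hac : μ ≪ volume) : μ (Ici 1) = 0 := by
  have hdouble : ∀ c > 0, μ (Ici (1 + c)) ≤ μ (Ici (1 + 2 * c)) := fun c hc =>
    calc μ (Ici (1 + c)) ≤ μ (T α ⁻¹' Ici (1 + 2 * c)) :=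
          measure_mono fun x (hx : 1 + c ≤ x) => by
            simp only [mem_preimage, mem_Ici, T_of_half_le (show 1/2 ≤ x by linarith)]
            linarith
      _ = μ (Ici (1 + 2 * c)) := hinv.measure_preimage measurableSet_Ici.nullMeasurableSet
  have htail : ∀ c > 0, μ (Ici (1 + c)) = 0 := by
    intro c hc
    have hiter : ∀ n : ℕ, μ (Ici (1 + c)) ≤ μ (Ici (1 + 2 ^ n * c)) := by
      intro n
      induction n with
      | zero => simp
      | succ n ih =>
        refine ih.trans ?_
        simpa only [pow_succ, mul_comm _ (2 : ℝ), mul_assoc] using hdouble _ (by positivity)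
    have hto : Tendsto (fun n : ℕ => 1 + 2 ^ n * c) atTop atTop :=
      tendsto_atTop_add_const_left _ _
        ((tendsto_pow_atTop_atTop_of_one_lt one_lt_two).atTop_mul_const hc)
    exact le_antisymm
      (ge_of_tendsto ((tendsto_measure_Ici_atTop μ).comp hto) (Eventually.of_forall hiter))
      zero_le
  have hIoi : μ (Ioi 1) = 0 := by
    have hunion : Ioi (1 : ℝ) = ⋃ n : ℕ, Ici (1 + 1 / ((n : ℝ) + 1)) := by
      ext x
      simp only [mem_Ioi, mem_iUnion, mem_Ici]
      refine ⟨fun hx => ?_, fun ⟨n, hn⟩ => by linarith [show 0 < 1 / ((n : ℝ) + 1) by positivity]⟩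
      obtain ⟨n, hn⟩ := exists_nat_one_div_lt (sub_pos.2 hx)
      exact ⟨n, by linarith⟩
    rw [hunion]
    exact measure_iUnion_null fun n => htail _ (by positivity)
  rw [← Ioi_insert]
  exact measure_union_null (hac Real.volume_singleton) hIoi

lemma measure_Ici_le [IsFiniteMeasure μ] (hinv : MeasurePreserving (T α) μ μ) (hac : μ ≪ volume)
    (hCt : 0 ≤ Ct)
    (hμleb : ∀ b c : ℝ, Icc b c ⊆ Ico (1/2 : ℝ) 1 → μ (Icc b c) ≤ ENNReal.ofReal (Ct * (c - b)))
    {a : ℝ} (ha : 1/2 ≤ a) : μ (Ici a) ≤ ENNReal.ofReal (Ct * (1 - a)) := by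
  have hIco : μ (Ico a 1) ≤ ENNReal.ofReal (Ct * (1 - a)) :=
    measure_Ico_le_of_forall_measure_Icc_le μ fun c hc =>
      (hμleb a c fun x hx => ⟨ha.trans hx.1, hx.2.trans_lt hc⟩).trans
        (ENNReal.ofReal_le_ofReal (by gcongr))
  calc μ (Ici a) ≤ μ (Ico a 1 ∪ Ici 1) := measure_mono fun x (hx : a ≤ x) => by
        rcases lt_or_ge x 1 with h | h
        exacts [Or.inl ⟨hx, h⟩, Or.inr h]
    _ ≤ μ (Ico a 1) + μ (Ici 1) := measure_union_le _ _
    _ ≤ ENNReal.ofReal (Ct * (1 - a)) := by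
        rw [measure_Ici_one_eq_zero hinv hac, add_zero]
        exact hIco

lemma measure_run_le (hinv : MeasurePreserving (T α) μ μ)
    (hIci : ∀ t, 1/2 ≤ t → μ (Ici t) ≤ ENNReal.ofReal (Ct * (1 - t))) (i k : ℕ) :
    μ {x | ∀ j < k + 1, 1/2 ≤ (T α)^[i + j] x} ≤ ENNReal.ofReal (Ct * (1/2)^(k + 1)) := by
  have hsub : {x | ∀ j < k + 1, 1/2 ≤ (T α)^[i + j] x} ⊆
      (T α)^[i] ⁻¹' Ici (1 - (1/2)^(k + 1)) := fun x hx =>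
    one_sub_half_pow_le_of_iterate_ge_half (α := α) k fun j hj => by
      rw [← Function.iterate_add_apply, add_comm]
      exact hx j hj
  have hhalf : (1/2 : ℝ)^(k + 1) ≤ 1/2 :=
    pow_le_of_le_one (by norm_num) (by norm_num) k.succ_ne_zero
  calc _ ≤ μ ((T α)^[i] ⁻¹' Ici (1 - (1/2)^(k + 1))) := measure_mono hsub
    _ = μ (Ici (1 - (1/2)^(k + 1))) :=
        (hinv.iterate i).measure_preimage measurableSet_Ici.nullMeasurableSet
    _ ≤ ENNReal.ofReal (Ct * (1/2)^(k + 1)) := by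
        simpa using hIci (1 - (1/2)^(k + 1)) (by linarith)

lemma measure_succ_le_runOne_le (hinv : MeasurePreserving (T α) μ μ)
    (hIci : ∀ t, 1/2 ≤ t → μ (Ici t) ≤ ENNReal.ofReal (Ct * (1 - t))) (n k : ℕ) :
    μ {x | k + 1 ≤ runOne α n x} ≤ ENNReal.ofReal ((n + 1) * (Ct * (1/2)^(k + 1))) := by
  calc μ {x | k + 1 ≤ runOne α n x}
      ≤ μ (⋃ i ∈ Finset.range (n + 1), {x | ∀ j < k + 1, 1/2 ≤ (T α)^[i + j] x}) :=
        measure_mono fun x hx => by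
          obtain ⟨i, hi, hrun⟩ := le_runOne_iff.1 hx
          exact mem_biUnion (Finset.mem_range.2 (by omega)) hrun
    _ ≤ ∑ i ∈ Finset.range (n + 1), μ {x | ∀ j < k + 1, 1/2 ≤ (T α)^[i + j] x} :=
        measure_biUnion_finset_le _ _
    _ ≤ ∑ i ∈ Finset.range (n + 1), ENNReal.ofReal (Ct * (1/2)^(k + 1)) :=
        Finset.sum_le_sum fun i _ => measure_run_le hinv hIci i k
    _ = ENNReal.ofReal ((n + 1) * (Ct * (1/2)^(k + 1))) := by
        rw [Finset.sum_const, Finset.card_range, nsmul_eq_mul, ← Nat.cast_add_one,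
          ENNReal.ofReal_mul (Nat.cast_nonneg _), ENNReal.ofReal_natCast]

/-- Borel–Cantelli along `n = 2^(a j)`: a run of length `(a+1) j + 1` among the first `n` digits
has probability at most `(n + 1) 2^(-(a+1) j - 1) ≤ 2^(-j)`, which is summable. -/
lemma ae_eventually_runOne_two_pow_le (hinv : MeasurePreserving (T α) μ μ)
    (hCt : 0 ≤ Ct) (hIci : ∀ t, 1/2 ≤ t → μ (Ici t) ≤ ENNReal.ofReal (Ct * (1 - t))) (a : ℕ) :
    ∀ᵐ x ∂μ, ∀ᶠ j in atTop, runOne α (2^(a * j)) x ≤ (a + 1) * j := by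
  set s : ℕ → Set ℝ := fun j => {x | (a + 1) * j + 1 ≤ runOne α (2^(a * j)) x}
  have hs : ∀ j, μ (s j) ≤ ENNReal.ofReal (Ct * (1/2)^j) := fun j =>
    (measure_succ_le_runOne_le hinv hIci _ _).trans <| ENNReal.ofReal_le_ofReal <| by
      have := two_pow_add_one_mul_half_pow_le (a * j) j
      rw [show a * j + j = (a + 1) * j by ring] at this
      push_cast
      nlinarith
  have hsum : ∑' j, μ (s j) ≠ ⊤ := by
    refine ne_top_of_le_ne_top ?_ (ENNReal.tsum_le_tsum hs)
    rw [← ENNReal.ofReal_tsum_of_nonneg (fun j => by positivity)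
      (summable_geometric_two.mul_left Ct)]
    exact ENNReal.ofReal_ne_top
  filter_upwards [ae_eventually_notMem hsum] with x hx
  filter_upwards [hx] with j hj
  simpa [s] using hj

end Invariant

theorem stmt11_general (α : ℝ)
    (μ : Measure ℝ) [IsProbabilityMeasure μ]
    (hinv : MeasurePreserving (T α) μ μ) (hac : μ ≪ volume)
    (Ct : ℝ) (hCt : 0 < Ct)
    (hμleb : ∀ b c : ℝ, Set.Icc b c ⊆ Set.Ico (1/2:ℝ) 1 →
      μ (Set.Icc b c) ≤ ENNReal.ofReal (Ct * (c - b))) :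
    ∀ᵐ x ∂μ, Filter.limsup
      (fun n : ℕ => (runOne α n x : ℝ) / Real.logb 2 n) atTop ≤ 1 := by
  have hIci : ∀ t, 1/2 ≤ t → μ (Ici t) ≤ ENNReal.ofReal (Ct * (1 - t)) := fun t ht =>
    measure_Ici_le hinv hac hCt.le hμleb ht
  have hbound : ∀ m : ℕ, ∀ᵐ x ∂μ, limsup (fun n : ℕ => (runOne α n x : ℝ) / logb 2 n) atTop ≤
      ((m + 1 + 1 : ℕ) : ℝ) / ((m + 1 : ℕ) : ℝ) := fun m =>
    (ae_eventually_runOne_two_pow_le hinv hCt.le hIci (m + 1)).mono fun x hx =>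
      limsup_div_logb_le_of_eventually_le (runOne_mono α x) m.succ_pos hx
  have hlim : Tendsto (fun m : ℕ => ((m + 1 + 1 : ℕ) : ℝ) / ((m + 1 : ℕ) : ℝ)) atTop (𝓝 1) := by
    have hsplit : ∀ m : ℕ, ((m + 1 + 1 : ℕ) : ℝ) / ((m + 1 : ℕ) : ℝ) = 1 + 1 / ((m : ℝ) + 1) := by
      intro m
      push_cast
      field_simp
    have := (tendsto_one_div_add_atTop_nhds_zero_nat (𝕜 := ℝ)).const_add 1
    rw [add_zero] at this
    exact this.congr fun m => (hsplit m).symm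
  filter_upwards [ae_all_iff.2 hbound] with x hx
  exact ge_of_tendsto' hlim hx

theorem stmt11 (α : ℝ) (hα0 : 0 < α) (hα1 : α < 1)
    (μ : Measure ℝ) [IsProbabilityMeasure μ]
    (hinv : MeasurePreserving (T α) μ μ) (hac : μ ≪ volume)
    (Ct : ℝ) (hCt : 0 < Ct)
    (hμleb : ∀ b c : ℝ, Set.Icc b c ⊆ Set.Ico (1/2:ℝ) 1 →
      μ (Set.Icc b c) ≤ ENNReal.ofReal (Ct * (c - b))) :
    ∀ᵐ x ∂μ, Filter.limsup
      (fun n : ℕ => (runOne α n x : ℝ) / Real.logb 2 n) atTop ≤ 1 :=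
  stmt11_general α μ hinv hac Ct hCt hμleb
end
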